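/- Let M = (W, D, I) be a first-order information model for a signature with two constants a, b, interpreting identity as real identity, and suppose M is full, i.e., {(a_w, b_w) | w ∈ W} = D². Then M supports the InqBQ sentence φ(a,b) := ( =(a,b) ∧ =(b,a) ∧ ∃ⁱz (z≠b) → ∃ⁱu (u≠a) ) at the state W if and only if D is finite. -/
import Mathlib


/-- A first-order signature. -/
structure Sig where
  Func : Type
  farity : Func → ℕ
  Rel : Type
  rarity : Rel → ℕ

/-- Terms over a signature; variables are natural numbers. -/
inductive Tm (σ : Sig) : Type where
  | var : ℕ → Tm σ
  | func : (f : σ.Func) → (Fin (σ.farity f) → Tm σ) → Tm σ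

/-- Formulas of InqBT+[x]: atoms, ⊥, ∧, inquisitive disjunction ⩒ (`ivee`),
    →, ∀ (`all`), inquisitive existential ∃ⁱ (`iex`), and [x] (`box`). -/
inductive Fm (σ : Sig) : Type where
  | rel : (R : σ.Rel) → (Fin (σ.rarity R) → Tm σ) → Fm σ
  | eq : Tm σ → Tm σ → Fm σ
  | bot : Fm σ
  | and : Fm σ → Fm σ → Fm σ
  | ivee : Fm σ → Fm σ → Fm σ
  | imp : Fm σ → Fm σ → Fm σ
  | all : ℕ → Fm σ → Fm σ
  | iex : ℕ → Fm σ → Fm σ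
  | box : ℕ → Fm σ → Fm σ

/-- A first-order model. -/
structure Model (σ : Sig) where
  D : Type
  nonempty : Nonempty D
  interpFunc : (f : σ.Func) → (Fin (σ.farity f) → D) → D
  interpRel : (R : σ.Rel) → (Fin (σ.rarity R) → D) → Prop

variable {σ : Sig}

/-- Value of a term under an assignment. -/
def Tm.val (M : Model σ) (g : ℕ → M.D) : Tm σ → M.D
  | .var n => g n
  | .func f ts => M.interpFunc f (fun i => (ts i).val M g)

/-- Free variables of a term. -/
def Tm.fv : Tm σ → Finset ℕ
  | .var n => {n}
  | .func _ ts => Finset.univ.biUnion (fun i => (ts i).fv)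

/-- Free variables of a formula. -/
def Fm.fv : Fm σ → Finset ℕ
  | .rel _ ts => Finset.univ.biUnion (fun i => (ts i).fv)
  | .eq t₁ t₂ => t₁.fv ∪ t₂.fv
  | .bot => ∅
  | .and φ ψ => φ.fv ∪ ψ.fv
  | .ivee φ ψ => φ.fv ∪ ψ.fv
  | .imp φ ψ => φ.fv ∪ ψ.fv
  | .all x φ => φ.fv.erase x
  | .iex x φ => φ.fv.erase x
  | .box x φ => φ.fv.erase x

/-- The team `X[x↦d]`, assigning the constant value `d` to `x` throughout `X`. -/
def cext (M : Model σ) (X : Set (ℕ → M.D)) (x : ℕ) (d : M.D) : Set (ℕ → M.D) :=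
  (fun g => Function.update g x d) '' X

/-- The team `X[x↦D]`, assigning all possible values to `x`. -/
def allext (M : Model σ) (X : Set (ℕ → M.D)) (x : ℕ) : Set (ℕ → M.D) :=
  ⋃ d : M.D, cext M X x d

/-- Team-semantic support relation `M ⊨_X φ` for InqBT+[x]. -/
def Support (M : Model σ) : Fm σ → Set (ℕ → M.D) → Prop
  | .rel R ts, X => ∀ g ∈ X, M.interpRel R (fun i => (ts i).val M g)
  | .eq t₁ t₂, X => ∀ g ∈ X, t₁.val M g = t₂.val M g
  | .bot, X => X = ∅
  | .and φ ψ, X => Support M φ X ∧ Support M ψ X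
  | .ivee φ ψ, X => Support M φ X ∨ Support M ψ X
  | .imp φ ψ, X => ∀ Y ⊆ X, Support M φ Y → Support M ψ Y
  | .all x φ, X => ∀ d : M.D, Support M φ (cext M X x d)
  | .iex x φ, X => ∃ d : M.D, Support M φ (cext M X x d)
  | .box x φ, X => Support M φ (allext M X x)

/-- A first-order information model `(W, D, I)` for InqBQ: a set of worlds,
    a domain of individuals, and world-relative interpretations (identity is
    interpreted as real identity). -/
structure QModel (σ : Sig) where
  W : Type
  D : Type
  neW : Nonempty W
  neD : Nonempty D
  interpFunc : W → (f : σ.Func) → (Fin (σ.farity f) → D) → D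
  interpRel : W → (R : σ.Rel) → (Fin (σ.rarity R) → D) → Prop

/-- World-relative value of a term. -/
def Tm.qval {σ : Sig} (M : QModel σ) (w : M.W) (g : ℕ → M.D) : Tm σ → M.D
  | .var n => g n
  | .func f ts => M.interpFunc w f (fun i => (ts i).qval M w g)

/-- InqBQ support `M, s ⊨_g φ` at a state `s ⊆ W` under assignment `g`.
    (The `[x]` constructor is unused in InqBQ; it is read as `∀`.) -/
def QSupport {σ : Sig} (M : QModel σ) : Fm σ → Set M.W → (ℕ → M.D) → Prop
  | .rel R ts, s, g => ∀ w ∈ s, M.interpRel w R (fun i => (ts i).qval M w g)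
  | .eq t₁ t₂, s, g => ∀ w ∈ s, t₁.qval M w g = t₂.qval M w g
  | .bot, s, _ => s = ∅
  | .and φ ψ, s, g => QSupport M φ s g ∧ QSupport M ψ s g
  | .ivee φ ψ, s, g => QSupport M φ s g ∨ QSupport M ψ s g
  | .imp φ ψ, s, g => ∀ t ⊆ s, QSupport M φ t g → QSupport M ψ t g
  | .all x φ, s, g => ∀ d : M.D, QSupport M φ s (Function.update g x d)
  | .iex x φ, s, g => ∃ d : M.D, QSupport M φ s (Function.update g x d)
  | .box x φ, s, g => ∀ d : M.D, QSupport M φ s (Function.update g x d)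

/-- The signature with two constant symbols `a` (= `false`) and `b` (= `true`). -/
abbrev CSig : Sig := ⟨Bool, fun _ => 0, Empty, fun r => r.elim⟩

/-- The constant `a`. -/
def ca : Tm CSig := .func false (fun i => i.elim0)

/-- The constant `b`. -/
def cb : Tm CSig := .func true (fun i => i.elim0)

/-- `?φ := φ ⩒ ¬φ`. -/
def qmark (φ : Fm CSig) : Fm CSig := .ivee φ (.imp φ .bot)

/-- Value question `λt := ∀x ?(x = t)` (here with `x` the variable `0`,
    which does not occur in the closed terms `a`, `b`). -/
def lamC (t : Tm CSig) : Fm CSig := .all 0 (qmark (.eq (.var 0) t))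

/-- `=(s,t) := λs → λt`. -/
def depC (s t : Tm CSig) : Fm CSig := .imp (lamC s) (lamC t)

/-- `s ≠ t := (s = t) → ⊥`. -/
def neqC (s t : Tm CSig) : Fm CSig := .imp (.eq s t) .bot

/-- `φ(a,b) := ( =(a,b) ∧ =(b,a) ∧ ∃ⁱz (z ≠ b) → ∃ⁱu (u ≠ a) )`. -/
def phiAB : Fm CSig :=
  .imp (.and (depC ca cb) (.and (depC cb ca) (.iex 2 (neqC (.var 2) cb))))
       (.iex 3 (neqC (.var 3) ca))

/-- Extension of `a` at world `w`. -/
def aExt (M : QModel CSig) (w : M.W) : M.D := M.interpFunc w false (fun i => i.elim0)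

/-- Extension of `b` at world `w`. -/
def bExt (M : QModel CSig) (w : M.W) : M.D := M.interpFunc w true (fun i => i.elim0)


section Aux

open Function Classical

lemma exists_inj_not_surj (D : Type) [Infinite D] :
    ∃ f : D → D, Function.Injective f ∧ ¬ Function.Surjective f := by
  classical
  let e := Infinite.natEmbedding D
  refine ⟨fun d => if h : ∃ n, e n = d then e (h.choose + 1) else d, ?_, ?_⟩
  · intro d d' hdd'
    by_cases h : ∃ n, e n = d <;> by_cases h' : ∃ n, e n = d' <;>
      simp only [h, h', dif_pos, dif_neg, not_false_iff] at hdd'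
    · have := e.injective hdd'
      rw [← h.choose_spec, ← h'.choose_spec, Nat.succ_injective this]
    · exact absurd ⟨_, hdd'⟩ h'
    · exact absurd ⟨_, hdd'.symm⟩ h
    · exact hdd'
  · intro hsurj
    obtain ⟨d, hd⟩ := hsurj (e 0)
    by_cases h : ∃ n, e n = d <;> simp only [h, dif_pos, dif_neg, not_false_iff] at hd
    · exact Nat.succ_ne_zero _ (e.injective hd)
    · exact h ⟨0, hd.symm⟩

variable (M : QModel CSig)

lemma qval_ca (w : M.W) (g : ℕ → M.D) : Tm.qval M w g ca = aExt M w := by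
  show M.interpFunc w false _ = M.interpFunc w false _
  congr 1
  funext i
  exact i.elim0

lemma qval_cb (w : M.W) (g : ℕ → M.D) : Tm.qval M w g cb = bExt M w := by
  show M.interpFunc w true _ = M.interpFunc w true _
  congr 1
  funext i
  exact i.elim0

lemma lam_iff (F : M.W → M.D) (t : Tm CSig)
    (ht : ∀ w g, t.qval M w g = F w) (s : Set M.W) (g : ℕ → M.D) :
    QSupport M (lamC t) s g ↔ ∀ w ∈ s, ∀ w' ∈ s, F w = F w' := by
  simp only [lamC, qmark, QSupport]
  constructor
  · intro h w hw w' hw'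
    rcases h (F w) with h1 | h2
    · have h1w := h1 w hw
      have h1w' := h1 w' hw'
      simp only [Tm.qval, Function.update_self, ht] at h1w h1w'
      exact h1w'
    · have := h2 {w} (by simpa using hw) ?_
      · exact absurd this (Set.singleton_ne_empty w)
      · intro w'' hw''
        simp only [Set.mem_singleton_iff] at hw''
        subst hw''
        simp [Tm.qval, ht]
  · intro h d
    by_cases hex : ∃ w ∈ s, F w = d
    · obtain ⟨w0, hw0, he⟩ := hex
      left
      intro w hw
      simp only [Tm.qval, Function.update_self, ht]
      rw [← he, h w0 hw0 w hw]
    · right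
      intro u hu hall
      rw [Set.eq_empty_iff_forall_notMem]
      intro w hw
      have := hall w hw
      simp only [Tm.qval, Function.update_self, ht] at this
      exact hex ⟨w, hu hw, this.symm⟩

lemma dep_iff (F F' : M.W → M.D) (t t' : Tm CSig)
    (ht : ∀ w g, t.qval M w g = F w) (ht' : ∀ w g, t'.qval M w g = F' w)
    (s : Set M.W) (g : ℕ → M.D) :
    QSupport M (depC t t') s g ↔
      ∀ w ∈ s, ∀ w' ∈ s, F w = F w' → F' w = F' w' := by
  simp only [depC, QSupport]
  constructor
  · intro h w hw w' hw' hFF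
    have hsub : ({w, w'} : Set M.W) ⊆ s := by
      intro x hx
      rcases hx with rfl | hx
      · exact hw
      · simp only [Set.mem_singleton_iff] at hx; subst hx; exact hw'
    have hconst : ∀ x ∈ ({w, w'} : Set M.W), ∀ y ∈ ({w, w'} : Set M.W), F x = F y := by
      intro x hx y hy
      simp only [Set.mem_insert_iff, Set.mem_singleton_iff] at hx hy
      rcases hx with rfl | rfl <;> rcases hy with rfl | rfl <;>
        first | rfl | exact hFF | exact hFF.symm
    have := h {w, w'} hsub ((lam_iff M F t ht _ g).2 hconst)
    exact (lam_iff M F' t' ht' _ g).1 this w (by simp) w' (by simp)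
  · intro h u hu hl
    have hl' := (lam_iff M F t ht u g).1 hl
    exact (lam_iff M F' t' ht' u g).2
      (fun w hw w' hw' => h w (hu hw) w' (hu hw') (hl' w hw w' hw'))

lemma neq_iff (F : M.W → M.D) (t : Tm CSig) (v : ℕ)
    (ht : ∀ w g, t.qval M w g = F w) (s : Set M.W) (g : ℕ → M.D) :
    QSupport M (.iex v (neqC (.var v) t)) s g ↔ ∃ d : M.D, ∀ w ∈ s, d ≠ F w := by
  simp only [neqC, QSupport]
  constructor
  · rintro ⟨d, hd⟩
    refine ⟨d, fun w hw hdF => ?_⟩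
    have := hd {w} (by simpa using hw) ?_
    · exact absurd this (Set.singleton_ne_empty w)
    · intro w' hw'
      simp only [Set.mem_singleton_iff] at hw'
      subst hw'
      simp [Tm.qval, ht, hdF]
  · rintro ⟨d, hd⟩
    refine ⟨d, fun u hu hall => ?_⟩
    rw [Set.eq_empty_iff_forall_notMem]
    intro w hw
    have := hall w hw
    simp only [Tm.qval, Function.update_self, ht] at this
    exact hd w (hu hw) this

end Aux

/-- In a full model (`{(a_w, b_w) | w ∈ W} = D²`), the InqBQ sentence
    `φ(a,b)` is supported at the state `W` iff `D` is finite. -/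
theorem stmt17 (M : QModel CSig)
    (hfull : Set.range (fun w => (aExt M w, bExt M w)) = Set.univ)
    (g : ℕ → M.D) :
    QSupport M phiAB (Set.univ : Set M.W) g ↔ Finite M.D := by
  classical
  have hca : ∀ (w : M.W) (g' : ℕ → M.D), ca.qval M w g' = aExt M w := fun w g' => qval_ca M w g'
  have hcb : ∀ (w : M.W) (g' : ℕ → M.D), cb.qval M w g' = bExt M w := fun w g' => qval_cb M w g'
  have hphi : QSupport M phiAB (Set.univ : Set M.W) g ↔
      ∀ s : Set M.W,
        ((∀ w ∈ s, ∀ w' ∈ s, aExt M w = aExt M w' → bExt M w = bExt M w') ∧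
         (∀ w ∈ s, ∀ w' ∈ s, bExt M w = bExt M w' → aExt M w = aExt M w') ∧
         (∃ d : M.D, ∀ w ∈ s, d ≠ bExt M w)) →
        ∃ d : M.D, ∀ w ∈ s, d ≠ aExt M w := by
    constructor
    · intro h s hs
      have := h s (Set.subset_univ s)
        ⟨(dep_iff M _ _ ca cb hca hcb s g).2 hs.1,
         (dep_iff M _ _ cb ca hcb hca s g).2 hs.2.1,
         (neq_iff M _ cb 2 hcb s g).2 hs.2.2⟩
      exact (neq_iff M _ ca 3 hca s g).1 this
    · intro h s _ ⟨h1, h2, h3⟩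
      exact (neq_iff M _ ca 3 hca s g).2 (h s
        ⟨(dep_iff M _ _ ca cb hca hcb s g).1 h1,
         (dep_iff M _ _ cb ca hcb hca s g).1 h2,
         (neq_iff M _ cb 2 hcb s g).1 h3⟩)
  rw [hphi]
  constructor
  · -- support → Finite
    intro h
    by_contra hfin
    have : Infinite M.D := not_finite_iff_infinite.1 hfin
    obtain ⟨f, hinj, hsurj⟩ := exists_inj_not_surj M.D
    have hW : ∀ d : M.D, ∃ w : M.W, bExt M w = f (aExt M w) ∧ aExt M w = d := by
      intro d
      have : (d, f d) ∈ Set.range (fun w => (aExt M w, bExt M w)) := by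
        rw [hfull]; trivial
      obtain ⟨w, hw⟩ := this
      have ha : aExt M w = d := congrArg Prod.fst hw
      have hb : bExt M w = f d := congrArg Prod.snd hw
      exact ⟨w, by rw [hb, ha], ha⟩
    have p1 : ∀ w ∈ {w : M.W | bExt M w = f (aExt M w)},
        ∀ w' ∈ {w : M.W | bExt M w = f (aExt M w)},
        aExt M w = aExt M w' → bExt M w = bExt M w' := by
      intro w hw w' hw' hFF
      rw [Set.mem_setOf_eq] at hw hw'
      rw [hw, hw', hFF]
    have p2 : ∀ w ∈ {w : M.W | bExt M w = f (aExt M w)},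
        ∀ w' ∈ {w : M.W | bExt M w = f (aExt M w)},
        bExt M w = bExt M w' → aExt M w = aExt M w' := by
      intro w hw w' hw' hFF
      rw [Set.mem_setOf_eq] at hw hw'
      exact hinj (by rw [← hw, ← hw', hFF])
    have p3 : ∃ d : M.D, ∀ w ∈ {w : M.W | bExt M w = f (aExt M w)}, d ≠ bExt M w := by
      rw [Function.Surjective] at hsurj
      push_neg at hsurj
      obtain ⟨d, hd⟩ := hsurj
      refine ⟨d, fun w hw hdb => hd (aExt M w) ?_⟩
      rw [Set.mem_setOf_eq] at hw
      rw [← hw, ← hdb]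
    obtain ⟨d0, hd0⟩ := h {w : M.W | bExt M w = f (aExt M w)} ⟨p1, p2, p3⟩
    obtain ⟨w, hw, haw⟩ := hW d0
    exact hd0 w hw haw.symm
  · -- Finite → support
    intro hfin s ⟨h1, h2, h3⟩
    by_contra hcon
    push_neg at hcon
    have hA : ∀ d : M.D, ∃ w ∈ s, aExt M w = d := by
      intro d
      obtain ⟨w, hw, hne⟩ := hcon d
      exact ⟨w, hw, hne.symm⟩
    choose wit hwit hwita using hA
    set f : M.D → M.D := fun d => bExt M (wit d) with hf
    have hinj : Function.Injective f := by
      intro d d' hdd'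
      have := h2 (wit d) (hwit d) (wit d') (hwit d') hdd'
      rw [hwita d, hwita d'] at this
      exact this
    have hsurj : Function.Surjective f := Finite.surjective_of_injective hinj
    obtain ⟨d0, hd0⟩ := h3
    obtain ⟨d, hd⟩ := hsurj d0
    exact hd0 (wit d) (hwit d) hd.symm
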